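/- arXiv:1603.06210 — 2 statements merged into one kernel-verified Lean document; each statement's English description precedes it below -/
import Mathlib

section
/- Let 1 < p < ∞, let K be a compact operator on L^p(ℝ), let t ∈ ℝ and m ∈ ℕ. Then ‖P_m ∘ U_{−t} ∘ Z_n ∘ K ∘ Z_n^{−1} ∘ U_t‖ → 0 and ‖U_{−t} ∘ Z_n ∘ K ∘ Z_n^{−1} ∘ U_t ∘ P_m‖ → 0 as n → ∞, in the operator norm on L^p(ℝ). -/
/-!
Modulations `U_t` and dilations `Z_n` are isometries of `L^p`, and conjugating `P_m` by `U_{-t} Z_n`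
gives multiplication by the indicator of `[-m/n, m/n]`. Hence the first norm is bounded by
`sup_{‖w‖ ≤ 1} ‖χ_{[-m/n, m/n]} K w‖`, which tends to `0` because `K` maps the unit ball to a
totally bounded set and truncation to sets of vanishing measure tends to `0` on each function.

For the second norm, `Z_n^{-1} U_t P_m` maps the unit ball into functions supported in
`[-m/n, m/n]`, so it suffices that `‖K w‖ → 0` uniformly over such `w`. Otherwise compactness
yields `w_k` with shrinking supports and `K w_k → y ≠ 0`. Along a subsequence whose supports are
almost disjoint, `‖∑_{k<N} w_k‖ ≤ N^{1/p} + 1` while `‖K ∑_{k<N} w_k‖ ≥ 3N‖y‖/4`, which is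
impossible for `p > 1`.
-/

open MeasureTheory Filter Topology
open scoped ENNReal

noncomputable section

/-- The space `L^p(ℝ)` of complex-valued `p`-integrable functions on `ℝ`, `p` real. -/
abbrev LpSp (p : ℝ) := Lp ℂ (ENNReal.ofReal p) (volume : Measure ℝ)

/-- Bounded operators on `L^p(ℝ)`. -/
abbrev OpSp (p : ℝ) [Fact (1 ≤ ENNReal.ofReal p)] := LpSp p →L[ℂ] LpSp p

/-- `M` is the operator of multiplication by the function `a` on `L^p(ℝ)`. -/
def IsMulOp (p : ℝ) [Fact (1 ≤ ENNReal.ofReal p)] (a : ℝ → ℂ) (M : OpSp p) : Prop :=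
  ∀ u : LpSp p, (M u : ℝ → ℂ) =ᵐ[volume] fun x => a x * (u : ℝ → ℂ) x

/-- `Z` is the dilation `(Z_n u)(x) = n^{-1/p} u(x/n)` on `L^p(ℝ)`. -/
def IsZOp (p : ℝ) [Fact (1 ≤ ENNReal.ofReal p)] (n : ℕ) (Z : OpSp p) : Prop :=
  ∀ u : LpSp p, (Z u : ℝ → ℂ) =ᵐ[volume]
    fun x => (((n : ℝ) ^ (-1 / p) : ℝ) : ℂ) * (u : ℝ → ℂ) (x / n)

/-- `Zi` is the inverse dilation `(Z_n^{-1} u)(x) = n^{1/p} u(n x)` on `L^p(ℝ)`. -/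
def IsZInvOp (p : ℝ) [Fact (1 ≤ ENNReal.ofReal p)] (n : ℕ) (Zi : OpSp p) : Prop :=
  ∀ u : LpSp p, (Zi u : ℝ → ℂ) =ᵐ[volume]
    fun x => (((n : ℝ) ^ (1 / p) : ℝ) : ℂ) * (u : ℝ → ℂ) (n * x)

/-- `U` is the modulation `(U_t u)(x) = e^{itx} u(x)` on `L^p(ℝ)`. -/
def IsUOp (p : ℝ) [Fact (1 ≤ ENNReal.ofReal p)] (t : ℝ) (U : OpSp p) : Prop :=
  ∀ u : LpSp p, (U u : ℝ → ℂ) =ᵐ[volume]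
    fun x => Complex.exp (Complex.I * (t : ℂ) * (x : ℂ)) * (u : ℝ → ℂ) x


open Set Function

section Indicator

variable {α E : Type*} [MeasurableSpace α] {μ : Measure α} [NormedAddCommGroup E]
  {q : ℝ≥0∞} {S : ℕ → Set α}

theorem TotallyBounded.eventually_eLpNorm_indicator_le [Fact (1 ≤ q)] (hq : q ≠ ∞)
    {T : Set (Lp E q μ)} (hT : TotallyBounded T) (hS : ∀ n, MeasurableSet (S n))
    (hμS : Tendsto (fun n => μ (S n)) atTop (𝓝 0)) {ε : ℝ} (hε : 0 < ε) :
    ∀ᶠ n in atTop, ∀ f ∈ T, eLpNorm ((S n).indicator f) q μ ≤ ENNReal.ofReal ε := by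
  obtain ⟨t, htfin, hTt⟩ := Metric.totallyBounded_iff.mp hT (ε / 2) (half_pos hε)
  have hnet : ∀ᶠ n in atTop, ∀ y ∈ t,
      eLpNorm ((S n).indicator y) q μ ≤ ENNReal.ofReal (ε / 2) := by
    refine (eventually_all_finite htfin).2 fun y _ => ?_
    obtain ⟨δ, hδ, hy⟩ := (Lp.memLp y).eLpNorm_indicator_le Fact.out hq (half_pos hε)
    filter_upwards [(tendsto_order.1 hμS).2 _ (ENNReal.ofReal_pos.2 hδ)] with n hn
    exact hy _ (hS n) hn.le
  filter_upwards [hnet] with n hn f hf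
  obtain ⟨y, hyt, hfy⟩ := mem_iUnion₂.1 (hTt hf)
  have hsplit : (S n).indicator f = (S n).indicator (⇑f - ⇑y) + (S n).indicator y := by
    rw [← indicator_add', sub_add_cancel]
  calc eLpNorm ((S n).indicator f) q μ
      ≤ eLpNorm ((S n).indicator (⇑f - ⇑y)) q μ + eLpNorm ((S n).indicator y) q μ := by
        rw [hsplit]
        exact eLpNorm_add_le (((Lp.aestronglyMeasurable f).sub
          (Lp.aestronglyMeasurable y)).indicator (hS n))
          ((Lp.aestronglyMeasurable y).indicator (hS n)) Fact.out
    _ ≤ edist f y + ENNReal.ofReal (ε / 2) := by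
        rw [Lp.edist_def]
        exact add_le_add (eLpNorm_indicator_le _) (hn y hyt)
    _ ≤ ENNReal.ofReal (ε / 2) + ENNReal.ofReal (ε / 2) := by
        rw [edist_dist]
        exact add_le_add (ENNReal.ofReal_le_ofReal (Metric.mem_ball.1 hfy).le) le_rfl
    _ = ENNReal.ofReal ε := by
        rw [← ENNReal.ofReal_add (half_pos hε).le (half_pos hε).le, add_halves]

theorem eLpNorm_sum_indicator_rpow_le {ι : Type*} (s : Finset ι) {D : ι → Set α}
    (hDm : ∀ i, MeasurableSet (D i)) (hD : Pairwise (Disjoint on D)) {f : ι → α → E}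
    (hf : ∀ i, AEStronglyMeasurable (f i) μ) (hq0 : q ≠ 0) (hq : q ≠ ∞) :
    eLpNorm (∑ i ∈ s, (D i).indicator (f i)) q μ ^ q.toReal
      ≤ ∑ i ∈ s, eLpNorm ((D i).indicator (f i)) q μ ^ q.toReal := by
  have hq_pos : 0 < q.toReal := ENNReal.toReal_pos hq0 hq
  simp only [eLpNorm_eq_eLpNorm' hq0 hq, ← lintegral_rpow_enorm_eq_rpow_eLpNorm' hq_pos]
  rw [← lintegral_finsetSum' _ fun i _ => (((hf i).indicator (hDm i)).enorm).pow_const _]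
  refine lintegral_mono fun x => ?_
  rw [Finset.sum_apply]
  by_cases hx : ∃ j ∈ s, x ∈ D j
  · obtain ⟨j, hj, hxj⟩ := hx
    rw [Finset.sum_eq_single_of_mem j hj fun i _ hij =>
      indicator_of_notMem (fun hxi => (hD hij).le_bot ⟨hxi, hxj⟩) _]
    exact Finset.single_le_sum (f := fun i => ‖(D i).indicator (f i) x‖ₑ ^ q.toReal)
      (fun i _ => zero_le) hj
  · push Not at hx
    rw [Finset.sum_eq_zero fun i hi => indicator_of_notMem (hx i hi) _, enorm_zero,
      ENNReal.zero_rpow_of_pos hq_pos]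
    exact zero_le

end Indicator

section AlmostDisjoint

variable {α E : Type*} [MeasurableSpace α] {μ : Measure α} [NormedAddCommGroup E]
  {q : ℝ≥0∞} [Fact (1 ≤ q)]

theorem norm_sum_le_of_eLpNorm_indicator_succ_le (hq : q ≠ ∞) {T : ℕ → Set α}
    (hT : ∀ k, MeasurableSet (T k)) (hT_anti : Antitone T) {v : ℕ → Lp E q μ}
    (hv : ∀ k, ‖v k‖ ≤ 1) (hsupp : ∀ k, ⇑(v k) =ᵐ[μ] (T k).indicator (v k))
    (htail : ∀ k, eLpNorm ((T (k + 1)).indicator (v k)) q μ ≤ 2⁻¹ ^ (k + 1)) (N : ℕ) :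
    ‖∑ k ∈ Finset.range N, v k‖ ≤ (N : ℝ) ^ (1 / q.toReal) + 1 := by
  have hq0 : q ≠ 0 := (zero_lt_one.trans_le Fact.out).ne'
  have hq_pos : 0 < q.toReal := ENNReal.toReal_pos hq0 hq
  -- `v k` splits into a part on `T k \ T (k + 1)`, these being disjoint, and a small tail.
  set D : ℕ → Set α := fun k => T k \ T (k + 1)
  have hDm : ∀ k, MeasurableSet (D k) := fun k => (hT k).diff (hT (k + 1))
  have hD : Pairwise (Disjoint on D) := by
    refine (pairwise_disjoint_on D).2 fun i j hij => disjoint_left.2 fun x hxi hxj => ?_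
    exact hxi.2 (hT_anti (Nat.succ_le_of_lt hij) hxj.1)
  have hsplit : ∀ k, ⇑(v k) =ᵐ[μ] (D k).indicator (v k) + (T (k + 1)).indicator (v k) :=
    fun k => (hsupp k).trans (by rw [indicator_sdiff (hT_anti k.le_succ), sub_add_cancel])
  have hsum : ⇑(∑ k ∈ Finset.range N, v k) =ᵐ[μ]
      ∑ k ∈ Finset.range N, (D k).indicator (v k)
        + ∑ k ∈ Finset.range N, (T (k + 1)).indicator (v k) := by
    filter_upwards [Lp.coeFn_finsetSum (Finset.range N) v, ae_all_iff.2 hsplit] with x hx hxs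
    simp only [hx, Pi.add_apply, Finset.sum_apply, ← Finset.sum_add_distrib]
    exact Finset.sum_congr rfl fun k _ => hxs k
  have hmeas : ∀ k (s : Set α), MeasurableSet s →
      AEStronglyMeasurable (s.indicator (v k)) μ :=
    fun k s hs => (Lp.aestronglyMeasurable (v k)).indicator hs
  have hdisj : eLpNorm (∑ k ∈ Finset.range N, (D k).indicator (v k)) q μ
      ≤ (N : ℝ≥0∞) ^ (1 / q.toReal) := by
    have hv' : ∀ k, eLpNorm ((D k).indicator (v k)) q μ ≤ 1 := fun k => by
      refine eLpNorm_indicator_le _ |>.trans ?_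
      rw [← Lp.enorm_def, ← ofReal_norm]
      exact ENNReal.ofReal_le_one.2 (hv k)
    have hpow : eLpNorm (∑ k ∈ Finset.range N, (D k).indicator (v k)) q μ ^ q.toReal ≤ N :=
      calc _ ≤ ∑ k ∈ Finset.range N, eLpNorm ((D k).indicator (v k)) q μ ^ q.toReal :=
            eLpNorm_sum_indicator_rpow_le _ hDm hD (fun k => Lp.aestronglyMeasurable _) hq0 hq
        _ ≤ ∑ _k ∈ Finset.range N, (1 : ℝ≥0∞) :=
            Finset.sum_le_sum fun k _ => ENNReal.rpow_le_one (hv' k) hq_pos.le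
        _ = N := by simp
    rw [one_div]
    exact (ENNReal.le_rpow_inv_iff hq_pos).2 hpow
  have htail_sum : eLpNorm (∑ k ∈ Finset.range N, (T (k + 1)).indicator (v k)) q μ ≤ 1 :=
    calc _ ≤ ∑ k ∈ Finset.range N, eLpNorm ((T (k + 1)).indicator (v k)) q μ :=
          eLpNorm_sum_le (fun k _ => hmeas k _ (hT _)) Fact.out
      _ ≤ ∑ k ∈ Finset.range N, (2⁻¹ : ℝ≥0∞) ^ (k + 1) := Finset.sum_le_sum fun k _ => htail k
      _ ≤ ∑' k, (2⁻¹ : ℝ≥0∞) ^ (k + 1) := ENNReal.sum_le_tsum _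
      _ = 1 := by simp [pow_succ, ENNReal.tsum_mul_right, ENNReal.mul_inv_cancel]
  have hfin : (N : ℝ≥0∞) ^ (1 / q.toReal) ≠ ∞ :=
    ENNReal.rpow_ne_top_of_nonneg (by positivity) (ENNReal.natCast_ne_top N)
  rw [Lp.norm_def, eLpNorm_congr_ae hsum]
  calc _ ≤ ((N : ℝ≥0∞) ^ (1 / q.toReal) + 1).toReal := by
        refine ENNReal.toReal_mono (by finiteness) ?_
        exact (eLpNorm_add_le (Finset.aestronglyMeasurable_sum _ fun k _ => hmeas k _ (hDm k))
          (Finset.aestronglyMeasurable_sum _ fun k _ => hmeas k _ (hT _)) Fact.out).trans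
          (add_le_add hdisj htail_sum)
    _ = (N : ℝ) ^ (1 / q.toReal) + 1 := by
        rw [ENNReal.toReal_add hfin ENNReal.one_ne_top, ← ENNReal.toReal_rpow,
          ENNReal.toReal_natCast, ENNReal.toReal_one]

end AlmostDisjoint

theorem exists_strictMono_forall_succ {P : ℕ → ℕ → Prop} {Q : ℕ → Prop}
    (hQ : ∀ᶠ n in atTop, Q n) (hP : ∀ n, ∀ᶠ m in atTop, P n m) :
    ∃ g : ℕ → ℕ, StrictMono g ∧ (∀ k, Q (g k)) ∧ ∀ k, P (g k) (g (k + 1)) := by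
  have hnext : ∀ n, ∃ m, n < m ∧ Q m ∧ P n m :=
    fun n => ((eventually_gt_atTop n).and (hQ.and (hP n))).exists
  choose f hf_gt hfQ hfP using hnext
  obtain ⟨n₀, hn₀⟩ := hQ.exists
  refine ⟨fun k => f^[k] n₀, strictMono_nat_of_lt_succ fun k => ?_, fun k => ?_, fun k => ?_⟩
  · simpa only [iterate_succ_apply'] using hf_gt _
  · cases k with
    | zero => exact hn₀
    | succ k => simpa only [iterate_succ_apply'] using hfQ _
  · simpa only [iterate_succ_apply'] using hfP _

theorem exists_nat_mul_rpow_add_one_lt {r : ℝ} (hr : r < 1) (C : ℝ) {c : ℝ} (hc : 0 < c) :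
    ∃ N : ℕ, C * ((N : ℝ) ^ r + 1) < c * N := by
  have hlim : Tendsto (fun x : ℝ => C * (x ^ (-(1 - r)) + x⁻¹)) atTop (𝓝 0) := by
    simpa using ((tendsto_rpow_neg_atTop (sub_pos.2 hr)).add tendsto_inv_atTop_zero).const_mul C
  obtain ⟨N, hN, hN1⟩ := (((hlim.comp tendsto_natCast_atTop_atTop).eventually
    (gt_mem_nhds hc)).and (eventually_ge_atTop 1)).exists
  have hN0 : (0 : ℝ) < N := by exact_mod_cast hN1
  refine ⟨N, ?_⟩
  have hsplit : C * ((N : ℝ) ^ r + 1) = C * ((N : ℝ) ^ (-(1 - r)) + (N : ℝ)⁻¹) * N := by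
    rw [neg_sub, Real.rpow_sub_one hN0.ne']
    field_simp
  rw [hsplit]
  exact mul_lt_mul_of_pos_right hN hN0

section CompactOperator

variable {α E F 𝕜 : Type*} [MeasurableSpace α] {μ : Measure α} [RCLike 𝕜]
  [NormedAddCommGroup E] [NormedSpace 𝕜 E] [NormedAddCommGroup F] [NormedSpace 𝕜 F]
  {q : ℝ≥0∞} [Fact (1 ≤ q)] {S : ℕ → Set α}

theorem ContinuousLinearMap.eq_zero_of_tendsto_of_ae_eq_indicator (hq1 : 1 < q) (hq : q ≠ ∞)
    (K : Lp E q μ →L[𝕜] F) (hS : ∀ n, MeasurableSet (S n)) (hS_anti : Antitone S)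
    (hμS : Tendsto (fun n => μ (S n)) atTop (𝓝 0)) {v : ℕ → Lp E q μ} (hv : ∀ n, ‖v n‖ ≤ 1)
    (hsupp : ∀ n, ⇑(v n) =ᵐ[μ] (S n).indicator (v n)) {y : F}
    (hy : Tendsto (fun n => K (v n)) atTop (𝓝 y)) : y = 0 := by
  by_contra hy0
  have hc : 0 < ‖y‖ / 4 := by positivity
  have hnear : ∀ᶠ n in atTop, ‖K (v n) - y‖ ≤ ‖y‖ / 4 :=
    (tendsto_iff_norm_sub_tendsto_zero.1 hy).eventually_le_const hc
  have htrunc : ∀ n, ∀ᶠ m in atTop, eLpNorm ((S m).indicator (v n)) q μ ≤ 2⁻¹ ^ (n + 1) := by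
    intro n
    filter_upwards [(totallyBounded_singleton (v n)).eventually_eLpNorm_indicator_le hq hS hμS
      (ε := 2⁻¹ ^ (n + 1)) (by positivity)] with m hm
    rw [ENNReal.ofReal_pow (by norm_num), ENNReal.ofReal_inv_of_pos two_pos,
      ENNReal.ofReal_ofNat] at hm
    exact hm (v n) rfl
  obtain ⟨g, hg, hg_near, hg_tail⟩ := exists_strictMono_forall_succ hnear htrunc
  have hsum (N : ℕ) : ‖∑ k ∈ Finset.range N, v (g k)‖ ≤ (N : ℝ) ^ (1 / q.toReal) + 1 :=
    norm_sum_le_of_eLpNorm_indicator_succ_le hq (fun k => hS _)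
      (hS_anti.comp_monotone hg.monotone) (fun k => hv _) (fun k => hsupp _)
      (fun k => (hg_tail k).trans (pow_le_pow_right_of_le_one' (by norm_num)
        (Nat.succ_le_succ (hg.id_le k)))) N
  have hlower (N : ℕ) : 3 * ‖y‖ / 4 * N ≤ ‖K‖ * ((N : ℝ) ^ (1 / q.toReal) + 1) := by
    have hdev : ‖∑ k ∈ Finset.range N, (y - K (v (g k)))‖ ≤ N * (‖y‖ / 4) :=
      (norm_sum_le _ _).trans (by
        simpa [norm_sub_rev] using Finset.sum_le_sum fun k (_ : k ∈ Finset.range N) => hg_near k)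
    have hNy : ‖∑ _k ∈ Finset.range N, y‖ = N * ‖y‖ := by
      simp [RCLike.norm_nsmul 𝕜]
    calc 3 * ‖y‖ / 4 * N ≤ ‖∑ k ∈ Finset.range N, K (v (g k))‖ := by
          have := norm_sub_norm_le (∑ _k ∈ Finset.range N, y) (∑ k ∈ Finset.range N, K (v (g k)))
          rw [← Finset.sum_sub_distrib, hNy] at this
          linarith
      _ = ‖K (∑ k ∈ Finset.range N, v (g k))‖ := by rw [map_sum]
      _ ≤ ‖K‖ * ((N : ℝ) ^ (1 / q.toReal) + 1) := K.le_of_opNorm_le_of_le le_rfl (hsum N)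
  have hr : 1 / q.toReal < 1 := by
    have : 1 < q.toReal := by simpa using ENNReal.toReal_strict_mono hq hq1
    exact (div_lt_one (zero_lt_one.trans this)).2 this
  obtain ⟨N, hN⟩ := exists_nat_mul_rpow_add_one_lt hr ‖K‖ (by positivity : 0 < 3 * ‖y‖ / 4)
  exact (hN.trans_le (hlower N)).false

theorem IsCompactOperator.eventually_norm_apply_le_of_ae_eq_indicator {K : Lp E q μ →L[𝕜] F}
    (hK : IsCompactOperator K) (hq1 : 1 < q) (hq : q ≠ ∞) (hS : ∀ n, MeasurableSet (S n))
    (hS_anti : Antitone S) (hμS : Tendsto (fun n => μ (S n)) atTop (𝓝 0)) {ε : ℝ} (hε : 0 < ε) :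
    ∀ᶠ n in atTop, ∀ w : Lp E q μ, ‖w‖ ≤ 1 → ⇑w =ᵐ[μ] (S n).indicator w → ‖K w‖ ≤ ε := by
  by_contra h
  obtain ⟨φ, hφ, hφw⟩ := extraction_of_frequently_atTop (not_eventually.1 h)
  simp only [not_forall, not_le] at hφw
  choose w hw1 hwsupp hwK using hφw
  obtain ⟨y, -, ψ, hψ, hy⟩ := (hK.isCompact_closure_image_closedBall 1).tendsto_subseq
    fun k => subset_closure (mem_image_of_mem K (mem_closedBall_zero_iff.2 (hw1 k)))
  have hy0 : y = 0 := K.eq_zero_of_tendsto_of_ae_eq_indicator hq1 hq (fun k => hS _)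
    (hS_anti.comp_monotone (hφ.comp hψ).monotone) (hμS.comp (hφ.comp hψ).tendsto_atTop)
    (fun k => hw1 _) (fun k => hwsupp _) hy
  obtain ⟨k, hk⟩ := ((hy0 ▸ hy).norm.eventually (gt_mem_nhds (by simpa using hε))).exists
  exact (hwK (ψ k)).not_gt hk

end CompactOperator

theorem eLpNorm_rpow_smul_comp_mul_left {E : Type*} [NormedAddCommGroup E] [NormedSpace ℝ E]
    (q : ℝ≥0∞) (f : ℝ → E) {a : ℝ} (ha : 0 < a) :
    eLpNorm (fun x => a ^ (1 / q.toReal) • f (a * x)) q volume = eLpNorm f q volume := by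
  have hemb : MeasurableEmbedding (fun x : ℝ => a * x) :=
    (Homeomorph.mulLeft₀ a ha.ne').measurableEmbedding
  have hscale : ‖a ^ (1 / q.toReal)‖ₑ * ENNReal.ofReal |a⁻¹| ^ (1 / q).toReal = 1 := by
    rw [Real.enorm_of_nonneg (by positivity), ENNReal.toReal_div, ENNReal.toReal_one,
      abs_of_pos (inv_pos.2 ha), ENNReal.ofReal_rpow_of_nonneg (by positivity) (by positivity),
      ← ENNReal.ofReal_mul (by positivity), ← Real.mul_rpow ha.le (by positivity),
      mul_inv_cancel₀ ha.ne', Real.one_rpow, ENNReal.ofReal_one]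
  rw [show (fun x => a ^ (1 / q.toReal) • f (a * x)) = a ^ (1 / q.toReal) • (f ∘ (a * ·)) from rfl,
    eLpNorm_const_smul, ← hemb.eLpNorm_map_measure, Real.map_volume_mul_left ha.ne',
    eLpNorm_smul_measure_of_ne_zero (by simpa using ha.ne'), smul_eq_mul, ← mul_assoc, hscale,
    one_mul]

theorem norm_exp_I_mul_mul (s x : ℝ) : ‖Complex.exp (Complex.I * s * x)‖ = 1 := by
  rw [mul_assoc, ← Complex.ofReal_mul]
  exact Complex.norm_exp_I_mul_ofReal _

/-- The interval `[-m/n, m/n]`, written as a preimage so that the family is antitone from `n = 0`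
on (with `m / 0 = 0` it would not be). -/
def shrunkInterval (m n : ℕ) : Set ℝ := (fun x : ℝ => (n : ℝ) * x) ⁻¹' Icc (-(m : ℝ)) m

theorem measurableSet_shrunkInterval (m n : ℕ) : MeasurableSet (shrunkInterval m n) :=
  measurableSet_Icc.preimage (measurable_const_mul _)

theorem antitone_shrunkInterval (m : ℕ) : Antitone (shrunkInterval m) := by
  intro n n' hnn' x hx
  simp only [shrunkInterval, mem_preimage, mem_Icc, ← abs_le, abs_mul, Nat.abs_cast] at hx ⊢
  exact le_trans (mul_le_mul_of_nonneg_right (by exact_mod_cast hnn') (abs_nonneg x)) hx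

theorem tendsto_volume_shrunkInterval (m : ℕ) :
    Tendsto (fun n => volume (shrunkInterval m n)) atTop (𝓝 0) := by
  have hvol : ∀ᶠ n : ℕ in atTop, volume (shrunkInterval m n) = ENNReal.ofReal (2 * m / n) := by
    filter_upwards [eventually_ge_atTop 1] with n hn
    have hn0 : (0 : ℝ) < n := by exact_mod_cast hn
    rw [shrunkInterval, Real.volume_preimage_mul_left hn0.ne', Real.volume_Icc,
      abs_of_pos (inv_pos.2 hn0), ← ENNReal.ofReal_mul (by positivity)]
    congr 1
    ring
  refine Tendsto.congr' (EventuallyEq.symm hvol) ?_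
  simpa using ENNReal.tendsto_ofReal (tendsto_const_div_atTop_nhds_zero_nat (2 * m : ℝ))


section Operators

variable {p : ℝ} [Fact (1 ≤ ENNReal.ofReal p)]

theorem toReal_ofReal_exponent : (ENNReal.ofReal p).toReal = p :=
  ENNReal.toReal_ofReal (zero_le_one.trans (ENNReal.one_le_ofReal.1 Fact.out))

theorem IsUOp.ae_norm_apply_isZOp {s : ℝ} {n : ℕ} {U Z : OpSp p} (hU : IsUOp p s U)
    (hZ : IsZOp p n Z) (v : LpSp p) :
    ∀ᵐ x, ‖U (Z v) x‖ = ‖((n : ℝ)⁻¹) ^ (1 / p) • v ((n : ℝ)⁻¹ * x)‖ := by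
  filter_upwards [hU (Z v), hZ v] with x hUx hZx
  rw [hUx, norm_mul, norm_exp_I_mul_mul, one_mul, hZx, div_eq_inv_mul x, norm_mul,
    Complex.norm_real, norm_smul, neg_div, Real.rpow_neg (Nat.cast_nonneg n),
    Real.inv_rpow (Nat.cast_nonneg n)]

theorem IsZInvOp.ae_norm_apply_isUOp {s : ℝ} {n : ℕ} (hn : n ≠ 0) {Zi U : OpSp p}
    (hZi : IsZInvOp p n Zi) (hU : IsUOp p s U) (w : LpSp p) :
    ∀ᵐ x, ‖Zi (U w) x‖ = ‖(n : ℝ) ^ (1 / p) • w (n * x)‖ := by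
  have hmul := Measure.quasiMeasurePreserving_smul (volume : Measure ℝ)
    (Nat.cast_ne_zero.2 hn : (n : ℝ) ≠ 0)
  filter_upwards [hZi (U w), hmul.ae_eq_comp (hU w)] with x hZix hUx
  simp only [comp_apply, smul_eq_mul] at hUx
  rw [hZix, norm_mul, hUx, norm_mul, norm_exp_I_mul_mul, one_mul, Complex.norm_real, norm_smul]

theorem norm_isUOp_isZOp {s : ℝ} {n : ℕ} (hn : n ≠ 0) {U Z : OpSp p} (hU : IsUOp p s U)
    (hZ : IsZOp p n Z) (v : LpSp p) : ‖U (Z v)‖ = ‖v‖ := by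
  have hdil := eLpNorm_rpow_smul_comp_mul_left (ENNReal.ofReal p) v
    (inv_pos.2 (Nat.cast_pos.2 (Nat.pos_of_ne_zero hn)))
  rw [toReal_ofReal_exponent] at hdil
  rw [Lp.norm_def, Lp.norm_def, eLpNorm_congr_norm_ae (hU.ae_norm_apply_isZOp hZ v), hdil]

theorem norm_isZInvOp_isUOp {s : ℝ} {n : ℕ} (hn : n ≠ 0) {Zi U : OpSp p}
    (hZi : IsZInvOp p n Zi) (hU : IsUOp p s U) (w : LpSp p) : ‖Zi (U w)‖ = ‖w‖ := by
  have hdil := eLpNorm_rpow_smul_comp_mul_left (ENNReal.ofReal p) w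
    (Nat.cast_pos.2 (Nat.pos_of_ne_zero hn))
  rw [toReal_ofReal_exponent] at hdil
  rw [Lp.norm_def, Lp.norm_def, eLpNorm_congr_norm_ae (hZi.ae_norm_apply_isUOp hn hU w), hdil]

theorem norm_isMulOp_indicator_le {m : ℕ} {P : OpSp p}
    (hP : IsMulOp p ((Icc (-(m : ℝ)) m).indicator fun _ => (1 : ℂ)) P) (u : LpSp p) :
    ‖P u‖ ≤ ‖u‖ := by
  refine Lp.norm_le_norm_of_ae_le ?_
  filter_upwards [hP u] with x hPx
  rw [hPx, norm_mul]
  refine mul_le_of_le_one_left (norm_nonneg _) ((norm_indicator_le_norm_self _ x).trans ?_)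
  simp

theorem eLpNorm_isMulOp_isUOp_isZOp {m n : ℕ} (hn : n ≠ 0) {s : ℝ} {P U Z : OpSp p}
    (hP : IsMulOp p ((Icc (-(m : ℝ)) m).indicator fun _ => (1 : ℂ)) P) (hU : IsUOp p s U)
    (hZ : IsZOp p n Z) (v : LpSp p) :
    eLpNorm (P (U (Z v))) (ENNReal.ofReal p) volume
      = eLpNorm ((shrunkInterval m n).indicator v) (ENNReal.ofReal p) volume := by
  have hn0 : (n : ℝ) ≠ 0 := Nat.cast_ne_zero.2 hn
  have hdil := eLpNorm_rpow_smul_comp_mul_left (ENNReal.ofReal p)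
    ((shrunkInterval m n).indicator v) (inv_pos.2 (Nat.cast_pos.2 (Nat.pos_of_ne_zero hn)))
  rw [toReal_ofReal_exponent] at hdil
  rw [← hdil]
  refine eLpNorm_congr_norm_ae ?_
  filter_upwards [hP (U (Z v)), hU.ae_norm_apply_isZOp hZ v] with x hPx hUZx
  have hmem : ((n : ℝ)⁻¹ * x ∈ shrunkInterval m n) ↔ x ∈ Icc (-(m : ℝ)) m := by
    rw [shrunkInterval, mem_preimage, mul_inv_cancel_left₀ hn0]
  rw [hPx, norm_mul]
  by_cases hx : x ∈ Icc (-(m : ℝ)) m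
  · rw [indicator_of_mem hx, indicator_of_mem (hmem.2 hx), norm_one, one_mul, hUZx]
  · rw [indicator_of_notMem hx, indicator_of_notMem (mt hmem.1 hx), norm_zero, zero_mul,
      smul_zero, norm_zero]

theorem isZInvOp_isUOp_isMulOp_ae_eq_indicator {m n : ℕ} (hn : n ≠ 0) {s : ℝ}
    {Zi U P : OpSp p} (hZi : IsZInvOp p n Zi) (hU : IsUOp p s U)
    (hP : IsMulOp p ((Icc (-(m : ℝ)) m).indicator fun _ => (1 : ℂ)) P) (u : LpSp p) :
    ⇑(Zi (U (P u))) =ᵐ[volume] (shrunkInterval m n).indicator (Zi (U (P u))) := by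
  have hmul := Measure.quasiMeasurePreserving_smul (volume : Measure ℝ)
    (Nat.cast_ne_zero.2 hn : (n : ℝ) ≠ 0)
  filter_upwards [hZi (U (P u)), hmul.ae_eq_comp (hU (P u)), hmul.ae_eq_comp (hP u)]
    with x hZix hUx hPx
  simp only [comp_apply, smul_eq_mul] at hUx hPx
  by_cases hx : x ∈ shrunkInterval m n
  · rw [indicator_of_mem hx]
  · rw [indicator_of_notMem hx, hZix, hUx, hPx,
      indicator_of_notMem (show (n : ℝ) * x ∉ Icc (-(m : ℝ)) m from hx)]
    simp

end Operators

theorem tendsto_norm_zero_of_forall_eventually_norm_le {ι E : Type*} [SeminormedAddCommGroup E]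
    {l : Filter ι} {f : ι → E} (h : ∀ ε > 0, ∀ᶠ i in l, ‖f i‖ ≤ ε) :
    Tendsto (fun i => ‖f i‖) l (𝓝 0) :=
  Metric.tendsto_nhds.2 fun ε hε => (h (ε / 2) (half_pos hε)).mono fun i hi => by
    rw [dist_zero_right, norm_norm]
    linarith

/-- for a compact operator `K` on `L^p(ℝ)`, `1 < p < ∞`, `t ∈ ℝ`, `m ∈ ℕ`,
`‖P_m U_{-t} Z_n K Z_n^{-1} U_t‖ → 0` and `‖U_{-t} Z_n K Z_n^{-1} U_t P_m‖ → 0` as `n → ∞`. -/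
theorem stmt_8 (p : ℝ) (hp : 1 < p) [Fact (1 ≤ ENNReal.ofReal p)]
    (K : OpSp p) (hK : IsCompactOperator (K : LpSp p → LpSp p))
    (t : ℝ) (m : ℕ)
    (P : ℕ → OpSp p)
    (hP : ∀ k : ℕ, IsMulOp p (Set.indicator (Set.Icc (-(k : ℝ)) (k : ℝ)) fun _ => (1 : ℂ)) (P k))
    (Z Zi : ℕ → OpSp p)
    (hZ : ∀ n : ℕ, 1 ≤ n → IsZOp p n (Z n)) (hZi : ∀ n : ℕ, 1 ≤ n → IsZInvOp p n (Zi n))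
    (U : ℝ → OpSp p) (hU : ∀ s : ℝ, IsUOp p s (U s)) :
    Tendsto (fun n : ℕ => ‖P m * U (-t) * Z n * K * Zi n * U t‖) atTop (𝓝 0) ∧
    Tendsto (fun n : ℕ => ‖U (-t) * Z n * K * Zi n * U t * P m‖) atTop (𝓝 0) := by
  have hKball : TotallyBounded (K '' Metric.closedBall 0 1) :=
    (hK.isCompact_closure_image_closedBall 1).totallyBounded.subset subset_closure
  constructor
  · refine tendsto_norm_zero_of_forall_eventually_norm_le fun ε hε => ?_
    filter_upwards [hKball.eventually_eLpNorm_indicator_le ENNReal.ofReal_ne_top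
      (measurableSet_shrunkInterval m) (tendsto_volume_shrunkInterval m) hε,
      eventually_ge_atTop 1] with n hn hn1
    refine ContinuousLinearMap.opNorm_le_of_unit_norm hε.le fun u hu => ?_
    have hw : K (Zi n (U t u)) ∈ K '' Metric.closedBall 0 1 := mem_image_of_mem _ <| by
      rw [mem_closedBall_zero_iff, norm_isZInvOp_isUOp (by omega) (hZi n hn1) (hU t), hu]
    calc ‖(P m * U (-t) * Z n * K * Zi n * U t) u‖
        = (eLpNorm (P m (U (-t) (Z n (K (Zi n (U t u)))))) (ENNReal.ofReal p) volume).toReal :=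
          Lp.norm_def _
      _ = (eLpNorm ((shrunkInterval m n).indicator (K (Zi n (U t u)))) (ENNReal.ofReal p)
            volume).toReal := by
          rw [eLpNorm_isMulOp_isUOp_isZOp (by omega) (hP m) (hU (-t)) (hZ n hn1)]
      _ ≤ ε := ENNReal.toReal_le_of_le_ofReal hε.le (hn _ hw)
  · refine tendsto_norm_zero_of_forall_eventually_norm_le fun ε hε => ?_
    filter_upwards [hK.eventually_norm_apply_le_of_ae_eq_indicator (ENNReal.one_lt_ofReal.2 hp)
      ENNReal.ofReal_ne_top (measurableSet_shrunkInterval m) (antitone_shrunkInterval m)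
      (tendsto_volume_shrunkInterval m) hε, eventually_ge_atTop 1] with n hn hn1
    refine ContinuousLinearMap.opNorm_le_of_unit_norm hε.le fun u hu => ?_
    have hw : ‖Zi n (U t (P m u))‖ ≤ 1 := by
      rw [norm_isZInvOp_isUOp (by omega) (hZi n hn1) (hU t), ← hu]
      exact norm_isMulOp_indicator_le (hP m) u
    calc ‖(U (-t) * Z n * K * Zi n * U t * P m) u‖ = ‖K (Zi n (U t (P m u)))‖ :=
          norm_isUOp_isZOp (by omega) (hU (-t)) (hZ n hn1) _
      _ ≤ ε := hn _ hw (isZInvOp_isUOp_isMulOp_ae_eq_indicator (by omega) (hZi n hn1) (hU t)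
          (hP m) u)
end
end

section
/- Let 1 ≤ p < ∞, let K be a P-compact operator on L^p(ℝ), and let t ∈ ℝ. Then for every u ∈ L^p(ℝ), ‖K (U_{−t} (Z_n u))‖_p → 0 as n → ∞. (In other words, the H^t-snapshot of the constant sequence {K} of a P-compact operator is zero.) -/
open MeasureTheory Filter Topology
open scoped ENNReal

noncomputable section

/-!
Write `v n = U_{-t} (Z n u)` and split `K = K P_m + K (1 - P_m)`. Since `U_{-t} Z_n` is an
isometry, the second part contributes at most `‖K (1 - P_m)‖ ‖u‖`, small for large `m`.
For fixed `m`, `|P_m v n| = |Z_n (χ_{[-m/n, m/n]} u)|`, so `‖P_m v n‖ = ‖χ_{[-m/n, m/n]} u‖`,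
which tends to `0` by absolute continuity of the integral.
-/

theorem ContinuousLinearMap.tendsto_norm_apply_of_tendsto_norm_mul_one_sub
    {𝕜 E ι : Type*} [NontriviallyNormedField 𝕜] [NormedAddCommGroup E] [NormedSpace 𝕜 E]
    {l : Filter ι} {K : E →L[𝕜] E} {P : ℕ → E →L[𝕜] E} {v : ι → E} {C : ℝ}
    (hK : Tendsto (fun m => ‖K * (1 - P m)‖) atTop (𝓝 0)) (hv : ∀ᶠ i in l, ‖v i‖ ≤ C)
    (hPv : ∀ m, Tendsto (fun i => ‖P m (v i)‖) l (𝓝 0)) :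
    Tendsto (fun i => ‖K (v i)‖) l (𝓝 0) := by
  refine tendsto_order.2 ⟨fun a ha => .of_forall fun i => ha.trans_le (norm_nonneg _),
    fun ε hε => ?_⟩
  have hKC : Tendsto (fun m => ‖K * (1 - P m)‖ * C) atTop (𝓝 0) := by
    simpa using hK.mul_const C
  obtain ⟨m, hm⟩ := (hKC.eventually (gt_mem_nhds hε)).exists
  have hbound : Tendsto (fun i => ‖K‖ * ‖P m (v i)‖ + ‖K * (1 - P m)‖ * C) l
      (𝓝 (‖K * (1 - P m)‖ * C)) := by
    simpa using ((hPv m).const_mul ‖K‖).add_const (‖K * (1 - P m)‖ * C)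
  filter_upwards [hbound.eventually (gt_mem_nhds hm), hv] with i hlt hvi
  calc ‖K (v i)‖ = ‖K (P m (v i)) + (K * (1 - P m)) (v i)‖ := by simp
    _ ≤ ‖K‖ * ‖P m (v i)‖ + ‖K * (1 - P m)‖ * ‖v i‖ :=
      norm_add_le_of_le (K.le_opNorm _) ((K * (1 - P m)).le_opNorm _)
    _ ≤ ‖K‖ * ‖P m (v i)‖ + ‖K * (1 - P m)‖ * C := by gcongr
    _ < ε := hlt

theorem MeasureTheory.MemLp.tendsto_eLpNorm_indicator {α E ι : Type*} [MeasurableSpace α]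
    [NormedAddCommGroup E] {μ : Measure α} {p : ℝ≥0∞} {f : α → E} {l : Filter ι}
    {s : ι → Set α} (hp_one : 1 ≤ p) (hp_top : p ≠ ∞) (hf : MemLp f p μ)
    (hs : ∀ i, MeasurableSet (s i)) (hμs : Tendsto (fun i => μ (s i)) l (𝓝 0)) :
    Tendsto (fun i => eLpNorm ((s i).indicator f) p μ) l (𝓝 0) := by
  refine ENNReal.tendsto_nhds_zero.2 fun ε hε => ?_
  rcases eq_or_ne ε ∞ with rfl | hε_top
  · exact .of_forall fun _ => le_top
  obtain ⟨δ, hδ, hfδ⟩ :=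
    hf.eLpNorm_indicator_le hp_one hp_top (ENNReal.toReal_pos hε.ne' hε_top)
  filter_upwards [ENNReal.tendsto_nhds_zero.1 hμs _ (ENNReal.ofReal_pos.2 hδ)] with i hi
  simpa [ENNReal.ofReal_toReal hε_top] using hfδ (s i) (hs i) hi

theorem eLpNorm_comp_div_right {E : Type*} [NormedAddCommGroup E] {p : ℝ≥0∞} (hp : p ≠ ∞)
    (f : ℝ → E) {c : ℝ} (hc : 0 < c) :
    eLpNorm (fun x => f (x / c)) p volume
      = ENNReal.ofReal c ^ (1 / p).toReal * eLpNorm f p volume := by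
  have hc' : c⁻¹ ≠ 0 := inv_ne_zero hc.ne'
  have hemb : MeasurableEmbedding (· * c⁻¹) := (Homeomorph.mulRight₀ _ hc').measurableEmbedding
  conv_lhs => simp only [div_eq_mul_inv]
  rw [← Function.comp_def f, ← hemb.eLpNorm_map_measure, Real.map_volume_mul_right hc', inv_inv,
    abs_of_pos hc, eLpNorm_smul_measure_of_ne_top hp, smul_eq_mul]

theorem eLpNorm_eq_of_norm_ae_eq_dilation {E F : Type*} [NormedAddCommGroup E]
    [NormedAddCommGroup F] {p : ℝ} (hp : 0 < p) {c : ℝ} (hc : 0 < c) {f : ℝ → E} {g : ℝ → F}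
    (h : ∀ᵐ x, ‖g x‖ = c ^ (-1 / p) * ‖f (x / c)‖) :
    eLpNorm g (ENNReal.ofReal p) volume = eLpNorm f (ENNReal.ofReal p) volume := by
  have hc' : 0 ≤ c ^ (-1 / p) := Real.rpow_nonneg hc.le _
  calc eLpNorm g (ENNReal.ofReal p) volume
      = eLpNorm (c ^ (-1 / p) • fun x => ‖f (x / c)‖) (ENNReal.ofReal p) volume :=
        eLpNorm_congr_norm_ae <| h.mono fun x hx => by
          rw [hx, Pi.smul_apply, smul_eq_mul, norm_mul, Real.norm_of_nonneg hc', norm_norm]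
    _ = ENNReal.ofReal (c ^ (-1 / p)) * (ENNReal.ofReal c ^ (1 / p) *
          eLpNorm f (ENNReal.ofReal p) volume) := by
        rw [eLpNorm_const_smul, eLpNorm_norm (fun x => f (x / c)),
          eLpNorm_comp_div_right ENNReal.ofReal_ne_top f hc, Real.enorm_of_nonneg hc',
          one_div, ENNReal.toReal_inv, ENNReal.toReal_ofReal hp.le, one_div]
    _ = eLpNorm f (ENNReal.ofReal p) volume := by
        rw [← mul_assoc, ENNReal.ofReal_rpow_of_pos hc, ← ENNReal.ofReal_mul hc',
          ← Real.rpow_add hc, neg_div, neg_add_cancel, Real.rpow_zero, ENNReal.ofReal_one,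
          one_mul]

section Operators

variable {p : ℝ} [Fact (1 ≤ ENNReal.ofReal p)]

theorem IsMulOp.norm_apply_ae {a : ℝ → ℂ} {M : OpSp p} (hM : IsMulOp p a M) (w : LpSp p) :
    ∀ᵐ x, ‖M w x‖ = ‖a x‖ * ‖w x‖ :=
  (hM w).mono fun x hx => by rw [hx, norm_mul]

theorem IsUOp.norm_apply_ae {t : ℝ} {U : OpSp p} (hU : IsUOp p t U) (w : LpSp p) :
    ∀ᵐ x, ‖U w x‖ = ‖w x‖ :=
  (hU w).mono fun x hx => by simp [hx, Complex.norm_exp]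

theorem IsZOp.norm_apply_ae {n : ℕ} {Z : OpSp p} (hZ : IsZOp p n Z) (w : LpSp p) :
    ∀ᵐ x, ‖Z w x‖ = (n : ℝ) ^ (-1 / p) * ‖w (x / n)‖ :=
  (hZ w).mono fun x hx => by
    rw [hx, norm_mul, Complex.norm_real, Real.norm_of_nonneg (by positivity)]

end Operators

theorem norm_indicator_Icc_mul_comp_div {E : Type*} [NormedAddCommGroup E] {c : ℝ} (hc : 0 < c)
    (r x : ℝ) (f : ℝ → E) :
    ‖(Set.Icc (-r) r).indicator (fun _ => (1 : ℂ)) x‖ * ‖f (x / c)‖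
      = ‖(Set.Icc (-(r / c)) (r / c)).indicator f (x / c)‖ := by
  have hmem : x ∈ Set.Icc (-r) r ↔ x / c ∈ Set.Icc (-(r / c)) (r / c) := by
    rw [Set.mem_Icc, Set.mem_Icc, ← neg_div, div_le_div_iff_of_pos_right hc,
      div_le_div_iff_of_pos_right hc]
  by_cases hx : x ∈ Set.Icc (-r) r
  · simp [hx, hmem.mp hx]
  · simp [hx, mt hmem.mpr hx]

theorem tendsto_volume_Icc_neg_div_nat (m : ℝ) :
    Tendsto (fun n : ℕ => volume (Set.Icc (-(m / n)) (m / n))) atTop (𝓝 0) := by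
  have h := (tendsto_const_div_atTop_nhds_zero_nat m).sub
    (tendsto_const_div_atTop_nhds_zero_nat m).neg
  simpa [Real.volume_Icc] using ENNReal.tendsto_ofReal h

theorem stmt_10_general (p : ℝ) (hp : 1 ≤ p) [Fact (1 ≤ ENNReal.ofReal p)]
    (P : ℕ → OpSp p)
    (hP : ∀ n : ℕ, IsMulOp p (Set.indicator (Set.Icc (-(n : ℝ)) (n : ℝ)) fun _ => (1 : ℂ)) (P n))
    (K : OpSp p)
    (hK1 : Tendsto (fun n : ℕ => ‖K * (1 - P n)‖) atTop (𝓝 0))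
    (t : ℝ) (U : ℝ → OpSp p) (hU : ∀ s : ℝ, IsUOp p s (U s))
    (Z : ℕ → OpSp p) (hZ : ∀ n : ℕ, 1 ≤ n → IsZOp p n (Z n)) :
    ∀ u : LpSp p, Tendsto (fun n : ℕ => ‖K ((U (-t)) ((Z n) u))‖) atTop (𝓝 0) := by
  intro u
  have hp0 : 0 < p := by linarith
  have hv : ∀ n : ℕ, 1 ≤ n →
      ∀ᵐ x, ‖U (-t) (Z n u) x‖ = (n : ℝ) ^ (-1 / p) * ‖u (x / n)‖ := fun n hn => by
    filter_upwards [(hU (-t)).norm_apply_ae (Z n u), (hZ n hn).norm_apply_ae u] with x h1 h2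
    rw [h1, h2]
  have hPv : ∀ m n : ℕ, 1 ≤ n → ∀ᵐ x, ‖P m (U (-t) (Z n u)) x‖
      = (n : ℝ) ^ (-1 / p) * ‖(Set.Icc (-(m / n : ℝ)) (m / n)).indicator u (x / n)‖ :=
    fun m n hn => by
      filter_upwards [(hP m).norm_apply_ae _, hv n hn] with x h1 h2
      rw [h1, h2, mul_left_comm, norm_indicator_Icc_mul_comp_div (by positivity)]
  refine K.tendsto_norm_apply_of_tendsto_norm_mul_one_sub (C := ‖u‖) hK1 ?_ fun m => ?_
  · filter_upwards [eventually_ge_atTop 1] with n hn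
    rw [Lp.norm_def, Lp.norm_def,
      eLpNorm_eq_of_norm_ae_eq_dilation hp0 (by positivity) (hv n hn)]
  · have hshrink := (Lp.memLp u).tendsto_eLpNorm_indicator Fact.out ENNReal.ofReal_ne_top
      (fun _ => measurableSet_Icc) (tendsto_volume_Icc_neg_div_nat m)
    refine ((ENNReal.tendsto_toReal ENNReal.zero_ne_top).comp hshrink).congr' ?_
    filter_upwards [eventually_ge_atTop 1] with n hn
    rw [Function.comp_apply, Lp.norm_def,
      eLpNorm_eq_of_norm_ae_eq_dilation hp0 (by positivity) (hPv m n hn)]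

/-- for a `P`-compact operator `K` on `L^p(ℝ)`, `1 ≤ p < ∞`, and `t ∈ ℝ`:
`‖K (U_{-t} (Z_n u))‖ → 0` for every `u ∈ L^p(ℝ)`; i.e. the `H^t`-snapshot of the constant
sequence `{K}` is zero. -/
theorem stmt_10 (p : ℝ) (hp : 1 ≤ p) [Fact (1 ≤ ENNReal.ofReal p)]
    (P : ℕ → OpSp p)
    (hP : ∀ n : ℕ, IsMulOp p (Set.indicator (Set.Icc (-(n : ℝ)) (n : ℝ)) fun _ => (1 : ℂ)) (P n))
    (K : OpSp p)
    (hK1 : Tendsto (fun n : ℕ => ‖K * (1 - P n)‖) atTop (𝓝 0))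
    (hK2 : Tendsto (fun n : ℕ => ‖(1 - P n) * K‖) atTop (𝓝 0))
    (t : ℝ) (U : ℝ → OpSp p) (hU : ∀ s : ℝ, IsUOp p s (U s))
    (Z : ℕ → OpSp p) (hZ : ∀ n : ℕ, 1 ≤ n → IsZOp p n (Z n)) :
    ∀ u : LpSp p, Tendsto (fun n : ℕ => ‖K ((U (-t)) ((Z n) u))‖) atTop (𝓝 0) :=
  stmt_10_general p hp P hP K hK1 t U hU Z hZ
end
end
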